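/- arXiv:1811.07478 — 5 statements merged into one kernel-verified Lean document; each statement's English description precedes it below -/
import Mathlib

section
/- Let n ≥ 3. Then the number of subgroups of order 2^k in the group C4 × C2 × C2^{n-3} equals [n-3 choose k]_2 + 3·2^{n-k-2}·[n-3 choose k-1]_2 + 2^{n-k}(2^{n-k-2}+1)·[n-3 choose k-2]_2 + 2^{2n-2k}·[n-3 choose k-3]_2, where [m choose j]_2 denotes the number of subgroups of order 2^j in an elementary abelian 2-group of order 2^m (the Gaussian binomial coefficient). -/
/-- `C2` : the cyclic group of order 2. -/
abbrev C2 := Multiplicative (ZMod 2)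

/-- `C4` : the cyclic group of order 4. -/
abbrev C4 := Multiplicative (ZMod 4)

/-- The number of subgroups of order `2^k` of `G`. -/
noncomputable def s (k : ℕ) (G : Type*) [Group G] : ℕ :=
  Nat.card {H : Subgroup G // Nat.card H = 2 ^ k}

/-- The Gaussian binomial coefficient `[m choose j]₂`: the number of `j`-dimensional
subspaces of `𝔽₂^m`, taken to be `0` when `j < 0` (or, automatically, when `j > m`). -/
noncomputable def gb (m : ℕ) (j : ℤ) : ℕ :=
  if 0 ≤ j then
    Nat.card {W : Submodule (ZMod 2) (Fin m → ZMod 2) //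
      Module.finrank (ZMod 2) W = j.toNat}
  else 0

/-! Work additively in `ZMod q × V` with `q = 2 ^ e` and `V` an `𝔽₂`-space. A subgroup `H` either
contains some `(1, w)`, or lies in the kernel of `(a, v) ↦ a mod 2`. In the first case
`H = {(a, v) | v + U = (a mod 2) • x}` with `U = H ∩ V` and `x = w + U`, so these `H` of
order `2 ^ k` correspond to pairs `(U, x ∈ V ⧸ U)` with `dim U = k - e`: there are
`2 ^ (dim V - (k - e)) * [dim V, k - e]₂` of them. In the second case `H` lies in a copy of
`ZMod (q / 2) × V`. For `q = 2` this is the Pascal rule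
`[m + 1, j]₂ = [m, j]₂ + 2 ^ (m + 1 - j) * [m, j - 1]₂`; for `q = 4` it reduces `ZMod 4 × V` to
`ZMod 2 × V`, and the Pascal rule, applied twice more, expresses everything through `[n - 3, ·]₂`. -/

open Module Function

noncomputable def addSubgroupCount (k : ℕ) (A : Type*) [AddGroup A] : ℕ :=
  Nat.card {H : AddSubgroup A // Nat.card H = 2 ^ k}

lemma s_multiplicative (k : ℕ) (A : Type*) [AddGroup A] :
    s k (Multiplicative A) = addSubgroupCount k A :=
  Nat.card_congr <| AddSubgroup.toSubgroup.symm.toEquiv.subtypeEquiv fun _ => Iff.rfl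

lemma Nat.card_subtype_eq_card_and_add_card_and_not {α : Type*} [Finite α] (p q : α → Prop) :
    Nat.card {x // p x} = Nat.card {x // p x ∧ q x} + Nat.card {x // p x ∧ ¬ q x} := by
  classical
  rw [← Nat.card_congr (Equiv.subtypeSubtypeEquivSubtypeInter p q),
    ← Nat.card_congr (Equiv.subtypeSubtypeEquivSubtypeInter p (¬ q ·)), ← Nat.card_sum]
  exact Nat.card_congr (Equiv.sumCompl fun x : {x // p x} => q x).symm

lemma card_addSubgroups_le_range {A B : Type*} [AddGroup A] [AddGroup B] {ι : A →+ B}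
    (hι : Injective ι) (c : ℕ) :
    Nat.card {H : AddSubgroup B // Nat.card H = c ∧ H ≤ ι.range} =
      Nat.card {K : AddSubgroup A // Nat.card K = c} :=
  Nat.card_congr
    { toFun H := ⟨H.1.comap ι, by
        rw [← AddSubgroup.card_map_of_injective hι, AddSubgroup.map_comap_eq_self H.2.2, H.2.1]⟩
      invFun K := ⟨K.1.map ι, by rw [AddSubgroup.card_map_of_injective hι, K.2],
        AddSubgroup.map_le_range ι K.1⟩
      left_inv H := Subtype.ext (AddSubgroup.map_comap_eq_self H.2.2)
      right_inv K := Subtype.ext (AddSubgroup.comap_map_eq_self_of_injective hι K.1) }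

section SubspaceCount

variable (V : Type*) [AddCommGroup V] [Module (ZMod 2) V]

noncomputable def subspaceCount (j : ℤ) : ℕ :=
  if 0 ≤ j then Nat.card {W : Submodule (ZMod 2) V // finrank (ZMod 2) W = j.toNat} else 0

lemma gb_eq_subspaceCount (m : ℕ) (j : ℤ) : gb m j = subspaceCount (Fin m → ZMod 2) j := rfl

lemma subspaceCount_natCast (k : ℕ) :
    subspaceCount V k = Nat.card {W : Submodule (ZMod 2) V // finrank (ZMod 2) W = k} := by
  simp [subspaceCount]

lemma subspaceCount_of_neg {j : ℤ} (hj : j < 0) : subspaceCount V j = 0 :=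
  if_neg hj.not_ge

variable [Finite V]

lemma card_eq_two_pow_finrank : Nat.card V = 2 ^ finrank (ZMod 2) V := by
  have : Fintype V := Fintype.ofFinite V
  rw [Nat.card_eq_fintype_card, card_eq_pow_finrank (K := ZMod 2), ZMod.card]

lemma addSubgroupCount_eq_subspaceCount (k : ℕ) : addSubgroupCount k V = subspaceCount V k := by
  rw [subspaceCount_natCast]
  refine Nat.card_congr <| (AddSubgroup.toZModSubmodule 2).toEquiv.subtypeEquiv fun H => ?_
  have hH : Nat.card H = Nat.card (AddSubgroup.toZModSubmodule 2 H) := rfl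
  rw [hH, card_eq_two_pow_finrank, (Nat.pow_right_injective le_rfl).eq_iff]
  rfl

lemma card_sigma_quotient_finrank_eq (j : ℤ) :
    (Nat.card {p : Σ U : Submodule (ZMod 2) V, V ⧸ U // (finrank (ZMod 2) p.1 : ℤ) = j} : ℚ) =
      2 ^ ((finrank (ZMod 2) V : ℤ) - j) * subspaceCount V j := by
  obtain hj | hj := lt_or_ge j 0
  · have : IsEmpty {p : Σ U : Submodule (ZMod 2) V, V ⧸ U // (finrank (ZMod 2) p.1 : ℤ) = j} :=
      ⟨fun p => by omega⟩
    simp [subspaceCount_of_neg V hj]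
  obtain ⟨k, rfl⟩ := Int.eq_ofNat_of_zero_le hj
  have := Fintype.ofFinite {U : Submodule (ZMod 2) V // finrank (ZMod 2) U = k}
  have (U : Submodule (ZMod 2) V) : Finite (V ⧸ U) := Quotient.finite _
  have hfiber (U : {U : Submodule (ZMod 2) V // finrank (ZMod 2) U = k}) :
      (Nat.card (V ⧸ U.1) : ℚ) = 2 ^ ((finrank (ZMod 2) V : ℤ) - k) := by
    have hdim := U.1.finrank_quotient_add_finrank
    rw [card_eq_two_pow_finrank, Nat.cast_pow, Nat.cast_ofNat, ← zpow_natCast]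
    congr 1
    omega
  calc (Nat.card {p : Σ U : Submodule (ZMod 2) V, V ⧸ U // (finrank (ZMod 2) p.1 : ℤ) = k} : ℚ)
      = Nat.card (Σ U : {U : Submodule (ZMod 2) V // finrank (ZMod 2) U = k}, V ⧸ U.1) := by
        congr 1
        exact Nat.card_congr ((Equiv.subtypeEquivRight fun _ => Nat.cast_inj).trans
          (Equiv.subtypeSigmaEquiv (fun U : Submodule (ZMod 2) V => V ⧸ U)
            fun U => finrank (ZMod 2) U = k))
    _ = ∑ U : {U : Submodule (ZMod 2) V // finrank (ZMod 2) U = k}, (Nat.card (V ⧸ U.1) : ℚ) := by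
        rw [Nat.card_sigma, Nat.cast_sum]
    _ = _ := by
        simp only [hfiber, Finset.sum_const, Finset.card_univ, nsmul_eq_mul,
          subspaceCount_natCast, Nat.card_eq_fintype_card]
        ring

end SubspaceCount

section ZModProd

variable {q : ℕ} (hq : 2 ∣ q) {V : Type*} [AddCommGroup V]

noncomputable def reduction : ZMod q × V →+ ZMod 2 :=
  (ZMod.castHom hq (ZMod 2)).toAddMonoidHom.comp (AddMonoidHom.fst _ _)

lemma reduction_apply (p : ZMod q × V) : reduction hq p = ZMod.castHom hq (ZMod 2) p.1 := rfl

@[simp]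
lemma reduction_zero_fst (w : V) : reduction hq (0, w) = 0 := map_zero (ZMod.castHom hq (ZMod 2))

@[simp]
lemma reduction_one_fst (w : V) : reduction hq (1, w) = 1 := map_one (ZMod.castHom hq (ZMod 2))

lemma isUnit_fst_of_reduction_ne_zero {e : ℕ} (hqe : q = 2 ^ e) {p : ZMod q × V}
    (h : reduction hq p ≠ 0) : IsUnit p.1 := by
  subst hqe
  rw [reduction_apply, ZMod.castHom_apply, ZMod.cast_eq_val, ZMod.natCast_ne_zero_iff_odd,
    ← Nat.coprime_two_left, Nat.coprime_comm] at h
  rw [← ZMod.natCast_zmod_val p.1, ZMod.isUnit_iff_coprime]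
  exact h.pow_right e

lemma le_ker_reduction_iff {e : ℕ} (hqe : q = 2 ^ e) {H : AddSubgroup (ZMod q × V)} :
    H ≤ (reduction hq).ker ↔ ¬ ∃ w, (1, w) ∈ H := by
  have : NeZero q := ⟨hqe ▸ NeZero.ne _⟩
  constructor
  · rintro hle ⟨w, hw⟩
    simpa using hle hw
  · intro hno p hp
    by_contra hne
    obtain ⟨c, hc⟩ := (isUnit_fst_of_reduction_ne_zero hq hqe hne).exists_left_inv
    refine hno ⟨c.val • p.2, ?_⟩
    have hcp : c.val • p = (1, c.val • p.2) := by
      ext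
      · rw [Prod.smul_fst, nsmul_eq_mul, ZMod.natCast_zmod_val, hc]
      · rfl
    exact hcp ▸ H.nsmul_mem hp c.val

variable [Module (ZMod 2) V]

noncomputable def graphMap (U : Submodule (ZMod 2) V) (x : V ⧸ U) : ZMod q × V →+ V ⧸ U where
  toFun p := U.mkQ p.2 - reduction hq p • x
  map_zero' := by simp
  map_add' p p' := by
    simp only [Prod.snd_add, map_add, add_smul]
    abel

noncomputable def graphSubgroup (U : Submodule (ZMod 2) V) (x : V ⧸ U) :
    AddSubgroup (ZMod q × V) :=
  (graphMap hq U x).ker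

variable {hq} in
lemma mem_graphSubgroup {U : Submodule (ZMod 2) V} {x : V ⧸ U} {p : ZMod q × V} :
    p ∈ graphSubgroup hq U x ↔ U.mkQ p.2 = reduction hq p • x :=
  sub_eq_zero

lemma exists_one_mem_graphSubgroup (U : Submodule (ZMod 2) V) (x : V ⧸ U) :
    ∃ w, (1, w) ∈ graphSubgroup hq U x := by
  obtain ⟨w, rfl⟩ := U.mkQ_surjective x
  exact ⟨w, by simp [mem_graphSubgroup]⟩

lemma card_graphSubgroup [Finite V] (U : Submodule (ZMod 2) V) (x : V ⧸ U) :
    Nat.card (graphSubgroup hq U x) = q * 2 ^ finrank (ZMod 2) U := by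
  have : Finite (V ⧸ U) := Quotient.finite _
  have hsurj : Surjective (graphMap hq U x) := fun y => by
    obtain ⟨w, rfl⟩ := U.mkQ_surjective y
    exact ⟨(0, w), by simp [graphMap]⟩
  have hquot : Nat.card ((ZMod q × V) ⧸ graphSubgroup hq U x) = Nat.card (V ⧸ U) :=
    Nat.card_congr (QuotientAddGroup.quotientKerEquivOfSurjective _ hsurj).toEquiv
  have hlagrange := (graphSubgroup hq U x).card_eq_card_quotient_mul_card_addSubgroup
  have hdim := U.finrank_quotient_add_finrank
  rw [Nat.card_prod, Nat.card_zmod, card_eq_two_pow_finrank, hquot,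
    card_eq_two_pow_finrank, ← hdim, pow_add] at hlagrange
  refine Nat.eq_of_mul_eq_mul_left (pow_pos two_pos (finrank (ZMod 2) (V ⧸ U))) ?_
  rw [← hlagrange]
  ring

lemma graphSubgroup_injective :
    Injective fun p : Σ U : Submodule (ZMod 2) V, V ⧸ U => graphSubgroup hq p.1 p.2 := by
  rintro ⟨U, x⟩ ⟨U', x'⟩ h
  have hmem (p : ZMod q × V) := SetLike.ext_iff.1 h p
  obtain rfl : U = U' := by
    ext w
    simpa [mem_graphSubgroup, Submodule.Quotient.mk_eq_zero] using hmem (0, w)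
  obtain ⟨w, rfl⟩ := U.mkQ_surjective x
  have hx' := (hmem (1, w)).1 (by simp [mem_graphSubgroup])
  rw [mem_graphSubgroup, reduction_one_fst, one_smul] at hx'
  rw [hx']

lemma exists_graphSubgroup_eq [NeZero q] {H : AddSubgroup (ZMod q × V)} {w₀ : V}
    (h₀ : (1, w₀) ∈ H) :
    ∃ (U : Submodule (ZMod 2) V) (x : V ⧸ U), graphSubgroup hq U x = H := by
  set U := AddSubgroup.toZModSubmodule 2 (H.comap (AddMonoidHom.inr (ZMod q) V))
  refine ⟨U, U.mkQ w₀, ?_⟩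
  ext ⟨a, v⟩
  have hdecomp : ((a, v) : ZMod q × V) = (0, v - a.val • w₀) + a.val • (1, w₀) := by
    ext <;> simp
  have hred : reduction hq (a, v) • U.mkQ w₀ = a.val • U.mkQ w₀ := by
    rw [reduction_apply, ZMod.castHom_apply, ← ZMod.natCast_val, Nat.cast_smul_eq_nsmul]
  rw [mem_graphSubgroup, hred, ← map_nsmul, Submodule.mkQ_apply, Submodule.mkQ_apply,
    Submodule.Quotient.eq]
  conv_rhs => rw [hdecomp, H.add_mem_cancel_right (H.nsmul_mem h₀ _)]
  rfl

theorem addSubgroupCount_zmod_prod [Finite V] {e : ℕ} (hqe : q = 2 ^ e) {A : Type*} [AddGroup A]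
    {ι : A →+ ZMod q × V} (hι : Injective ι) (hrange : ι.range = (reduction hq).ker) (k : ℕ) :
    (addSubgroupCount k (ZMod q × V) : ℚ) =
      addSubgroupCount k A + 2 ^ ((finrank (ZMod 2) V : ℤ) + e - k) * subspaceCount V (k - e) := by
  have : NeZero q := ⟨hqe ▸ NeZero.ne _⟩
  have hcard (p : Σ U : Submodule (ZMod 2) V, V ⧸ U) :
      Nat.card (graphSubgroup hq p.1 p.2) = 2 ^ k ↔ (finrank (ZMod 2) p.1 : ℤ) = k - e := by
    rw [card_graphSubgroup, hqe, ← pow_add, (Nat.pow_right_injective le_rfl).eq_iff]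
    omega
  let graphs : {p : Σ U : Submodule (ZMod 2) V, V ⧸ U // (finrank (ZMod 2) p.1 : ℤ) = k - e} ≃
      {H : AddSubgroup (ZMod q × V) // Nat.card H = 2 ^ k ∧ ∃ w, (1, w) ∈ H} :=
    Equiv.ofBijective
      (fun p => ⟨graphSubgroup hq p.1.1 p.1.2, (hcard p.1).2 p.2,
        exists_one_mem_graphSubgroup hq p.1.1 p.1.2⟩)
      ⟨fun p p' h => Subtype.ext (graphSubgroup_injective hq (congrArg Subtype.val h)),
        fun ⟨H, hH, w, hw⟩ => by
          obtain ⟨U, x, rfl⟩ := exists_graphSubgroup_eq hq hw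
          exact ⟨⟨⟨U, x⟩, (hcard ⟨U, x⟩).1 hH⟩, rfl⟩⟩
  have hrest : Nat.card {H : AddSubgroup (ZMod q × V) // Nat.card H = 2 ^ k ∧ ¬ ∃ w, (1, w) ∈ H} =
      addSubgroupCount k A := by
    simp_rw [← le_ker_reduction_iff hq hqe, ← hrange]
    exact card_addSubgroups_le_range hι _
  rw [addSubgroupCount, Nat.card_subtype_eq_card_and_add_card_and_not _ (∃ w, (1, w) ∈ ·),
    ← Nat.card_congr graphs, hrest, Nat.cast_add, card_sigma_quotient_finrank_eq,
    sub_sub_eq_add_sub, add_comm]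

end ZModProd

section

variable (V : Type*) [AddCommGroup V] [Module (ZMod 2) V] [Finite V]

lemma subspaceCount_zmod_two_prod (j : ℤ) :
    (subspaceCount (ZMod 2 × V) j : ℚ) =
      subspaceCount V j + 2 ^ ((finrank (ZMod 2) V : ℤ) + 1 - j) * subspaceCount V (j - 1) := by
  obtain hj | hj := lt_or_ge j 0
  · simp [subspaceCount_of_neg _ hj, subspaceCount_of_neg _ (show j - 1 < 0 by omega)]
  obtain ⟨k, rfl⟩ := Int.eq_ofNat_of_zero_le hj
  have hrange : (AddMonoidHom.inr (ZMod 2) V).range = (reduction dvd_rfl).ker := by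
    ext ⟨a, v⟩
    simp [reduction_apply, eq_comm]
  have := addSubgroupCount_zmod_prod dvd_rfl (pow_one 2).symm
    (fun _ _ h => congrArg Prod.snd h) hrange k
  rwa [addSubgroupCount_eq_subspaceCount, addSubgroupCount_eq_subspaceCount, Nat.cast_one] at this

def doubling : ZMod 2 →+ ZMod 4 where
  toFun x := (2 * x.val : ℕ)
  map_zero' := by decide
  map_add' := by decide

lemma addSubgroupCount_zmod_four_prod (k : ℕ) :
    (addSubgroupCount k (ZMod 4 × V) : ℚ) =
      subspaceCount (ZMod 2 × V) k
        + 2 ^ ((finrank (ZMod 2) V : ℤ) + 2 - k) * subspaceCount V (k - 2) := by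
  have hrange : (doubling.prodMap (AddMonoidHom.id V)).range = (reduction (by norm_num)).ker := by
    have hdoubling (a : ZMod 4) :
        (∃ b, doubling b = a) ↔ ZMod.castHom (by norm_num : 2 ∣ 4) (ZMod 2) a = 0 := by
      revert a; decide
    ext ⟨a, v⟩
    rw [AddMonoidHom.mem_ker, reduction_apply, ← hdoubling]
    simp [AddSubgroup.mem_prod]
  have hinj : Injective (doubling.prodMap (AddMonoidHom.id V)) := by
    rw [AddMonoidHom.coe_prodMap]
    exact Prod.map_injective.2 ⟨by decide, injective_id⟩
  have := addSubgroupCount_zmod_prod _ (show 4 = 2 ^ 2 by norm_num) hinj hrange k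
  rwa [addSubgroupCount_eq_subspaceCount (ZMod 2 × V), Nat.cast_ofNat] at this

end

theorem s_k_of_C4_times_C2_pow_general (n k : ℕ) (hn : 3 ≤ n) :
    (s k (C4 × C2 × (Fin (n - 3) → C2)) : ℚ) =
      gb (n - 3) k
        + 3 * 2 ^ ((n : ℤ) - k - 2) * gb (n - 3) ((k : ℤ) - 1)
        + 2 ^ ((n : ℤ) - k) * (2 ^ ((n : ℤ) - k - 2) + 1) * gb (n - 3) ((k : ℤ) - 2)
        + 2 ^ (2 * (n : ℤ) - 2 * k) * gb (n - 3) ((k : ℤ) - 3) := by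
  obtain ⟨m, rfl⟩ : ∃ m, n = m + 3 := ⟨n - 3, by omega⟩
  have hW : finrank (ZMod 2) (Fin m → ZMod 2) = m := finrank_fin_fun _
  have hV : finrank (ZMod 2) (ZMod 2 × (Fin m → ZMod 2)) = m + 1 := by
    rw [finrank_prod, finrank_self, hW, add_comm]
  rw [Nat.add_sub_cancel, show s k (C4 × C2 × (Fin m → C2)) =
      s k (Multiplicative (ZMod 4 × ZMod 2 × (Fin m → ZMod 2))) from rfl, s_multiplicative,
    addSubgroupCount_zmod_four_prod, subspaceCount_zmod_two_prod, hV,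
    subspaceCount_zmod_two_prod, subspaceCount_zmod_two_prod, subspaceCount_zmod_two_prod, hW]
  simp only [gb_eq_subspaceCount]
  -- every exponent is `m + 1 - k` plus a constant; `ring_nf` exposes this after the substitution
  generalize (k : ℤ) = K
  obtain ⟨j, rfl⟩ : ∃ j : ℤ, K = m + 1 - j := ⟨m + 1 - K, by ring⟩
  push_cast
  ring_nf
  simp only [zpow_add₀ (two_ne_zero : (2 : ℚ) ≠ 0), zpow_mul, zpow_two, sq]
  ring

theorem s_k_of_C4_times_C2_pow (n k : ℕ) (hn : 3 ≤ n) (hk : k ≤ n) :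
    (s k (C4 × C2 × (Fin (n - 3) → C2)) : ℚ) =
      gb (n - 3) k
        + 3 * 2 ^ ((n : ℤ) - k - 2) * gb (n - 3) ((k : ℤ) - 1)
        + 2 ^ ((n : ℤ) - k) * (2 ^ ((n : ℤ) - k - 2) + 1) * gb (n - 3) ((k : ℤ) - 2)
        + 2 ^ (2 * (n : ℤ) - 2 * k) * gb (n - 3) ((k : ℤ) - 3) :=
  s_k_of_C4_times_C2_pow_general n k hn
end

section
/- For every n ≥ 3 and every 0 ≤ k ≤ n, the number of subgroups of order 2^k in C4 × C2^{n-2} is at most the number of subgroups of order 2^k in D8 × C2^{n-3}. -/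
/-!
Write `G = (C4 × C2) × V` and `H = D8 × V` with `V` elementary abelian. Both have a central
involution, `c = (2, 0, 0)` and `z = (r², 0)`, with quotient `(C2 × C2) × V`, and both contain a
copy of `(C2 × C2) × V`, by embeddings sending one element to `c` and to `z` respectively.
A subgroup `K ≤ G` containing `c` is sent to the preimage in `H` of its image in the quotient.
Every square in `G` is `1` or `c`, so a subgroup not containing `c` has exponent `2` and lies in
the copy of `(C2 × C2) × V`; it is sent to the corresponding subgroup of `H`.
Both assignments preserve orders, and `z` lies in the image exactly when `c ∈ K`, so together
they give an order-preserving injection on subgroups.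
-/

def Fin.consMulEquiv (M : Type*) [Monoid M] (m : ℕ) : M × (Fin m → M) ≃* (Fin (m + 1) → M) :=
  MulEquiv.mk' (Fin.consEquiv fun _ => M) fun _ _ => by
    ext i
    cases i using Fin.cases <;> rfl

section

variable {G H : Type*} [Group G] [Group H]

theorem s_congr (k : ℕ) (e : G ≃* H) : s k G = s k H :=
  Nat.card_congr <| e.mapSubgroup.toEquiv.subtypeEquiv fun K => by
    rw [← Subgroup.card_map_of_injective (f := e.toMonoidHom) e.injective]
    rfl

theorem s_le_of_injective [Finite H] (k : ℕ) (Φ : Subgroup G → Subgroup H)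
    (hΦ : Function.Injective Φ) (hcard : ∀ K, Nat.card (Φ K) = Nat.card K) : s k G ≤ s k H :=
  Nat.card_le_card_of_injective (fun K => ⟨Φ K, (hcard K).trans K.2⟩)
    fun _ _ h => Subtype.ext (hΦ (congrArg Subtype.val h))

variable {Q A : Type*} [Group Q] [Group A]

theorem card_comap_map_of_ker_le [Finite H] {π : G →* Q} {ρ : H →* Q}
    (hπ : Function.Surjective π) (hρ : Function.Surjective ρ) (hcard : Nat.card G = Nat.card H)
    {K : Subgroup G} (hK : π.ker ≤ K) : Nat.card ((K.map π).comap ρ) = Nat.card K := by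
  have hindex : ((K.map π).comap ρ).index = K.index := by
    rw [Subgroup.index_comap_of_surjective _ hρ, ← Subgroup.index_comap_of_surjective _ hπ,
      Subgroup.comap_map_eq_self hK]
  have hpos : 0 < ((K.map π).comap ρ).index := Nat.pos_of_ne_zero Subgroup.index_ne_zero_of_finite
  refine Nat.eq_of_mul_eq_mul_right hpos ?_
  rw [Subgroup.card_mul_index, hindex, Subgroup.card_mul_index, hcard]

theorem injOn_comap_map {π : G →* Q} {ρ : H →* Q} (hρ : Function.Surjective ρ) :
    Set.InjOn (fun K : Subgroup G => (K.map π).comap ρ) {K | π.ker ≤ K} := by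
  intro K₁ h₁ K₂ h₂ h
  rw [← Subgroup.comap_map_eq_self h₁, ← Subgroup.comap_map_eq_self h₂,
    Subgroup.comap_injective hρ h]

theorem card_map_comap_of_le_range {α : A →* G} {β : A →* H} (hα : Function.Injective α)
    (hβ : Function.Injective β) {K : Subgroup G} (hK : K ≤ α.range) :
    Nat.card ((K.comap α).map β) = Nat.card K := by
  rw [Subgroup.card_map_of_injective hβ, ← Subgroup.card_map_of_injective hα,
    Subgroup.map_comap_eq_self hK]

theorem injOn_map_comap {α : A →* G} {β : A →* H} (hβ : Function.Injective β) :
    Set.InjOn (fun K : Subgroup G => (K.comap α).map β) {K | K ≤ α.range} := by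
  intro K₁ h₁ K₂ h₂ h
  rw [← Subgroup.map_comap_eq_self h₁, ← Subgroup.map_comap_eq_self h₂,
    Subgroup.map_injective hβ h]

theorem s_le_of_central_involution [Finite H] (k : ℕ) {π : G →* Q} {ρ : H →* Q}
    (hπ : Function.Surjective π) (hρ : Function.Surjective ρ) (hcard : Nat.card G = Nat.card H)
    {α : A →* G} {β : A →* H} (hα : Function.Injective α) (hβ : Function.Injective β)
    {a : A} (hker : π.ker ≤ Subgroup.zpowers (α a)) (hz : ρ (β a) = 1)
    (hsq : ∀ x : G, x ^ 2 = α a ∨ x ∈ α.range) : s k G ≤ s k H := by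
  classical
  let Φ : Subgroup G → Subgroup H := fun K =>
    if α a ∈ K then (K.map π).comap ρ else (K.comap α).map β
  have ker_le {K : Subgroup G} (hK : α a ∈ K) : π.ker ≤ K :=
    hker.trans (Subgroup.zpowers_le.2 hK)
  have le_range {K : Subgroup G} (hK : α a ∉ K) : K ≤ α.range := fun x hx =>
    (hsq x).resolve_left fun hx2 => hK (hx2 ▸ K.pow_mem hx 2)
  have mem_Φ (K : Subgroup G) : β a ∈ Φ K ↔ α a ∈ K := by
    by_cases hK : α a ∈ K
    · simp [Φ, hK, hz]
    · simp [Φ, hK, hβ.eq_iff]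
  refine s_le_of_injective k Φ (fun K₁ K₂ h => ?_) fun K => ?_
  · by_cases h₁ : α a ∈ K₁
    · have h₂ : α a ∈ K₂ := (mem_Φ K₂).1 (h ▸ (mem_Φ K₁).2 h₁)
      simp only [Φ, if_pos h₁, if_pos h₂] at h
      exact injOn_comap_map hρ (ker_le h₁) (ker_le h₂) h
    · have h₂ : α a ∉ K₂ := fun h₂ => h₁ ((mem_Φ K₁).1 (h ▸ (mem_Φ K₂).2 h₂))
      simp only [Φ, if_neg h₁, if_neg h₂] at h
      exact injOn_map_comap hβ (le_range h₁) (le_range h₂) h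
  · by_cases hK : α a ∈ K
    · simpa only [Φ, if_pos hK] using card_comap_map_of_ker_le hπ hρ hcard (ker_le hK)
    · simpa only [Φ, if_neg hK] using card_map_comap_of_le_range hα hβ (le_range hK)

end

section

open DihedralGroup Multiplicative

def C4C2.toKlein : C4 × C2 →* C2 × C2 :=
  MonoidHom.mk' (fun x => (ofAdd (x.1.toAdd.val : ZMod 2), x.2)) (by decide)

def Klein.toC4C2 : C2 × C2 →* C4 × C2 :=
  MonoidHom.mk' (fun x => (ofAdd (2 * (x.1.toAdd.val : ZMod 4)), x.2)) (by decide)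

def D8.toKlein : DihedralGroup 4 →* C2 × C2 :=
  MonoidHom.mk' (fun
    | r i => (ofAdd (i.val : ZMod 2), 1)
    | sr i => (ofAdd (i.val : ZMod 2), ofAdd 1)) (by decide)

def Klein.toD8 : C2 × C2 →* DihedralGroup 4 :=
  MonoidHom.mk' (fun x => if x.2 = 1 then r (2 * x.1.toAdd.val) else sr (2 * x.1.toAdd.val))
    (by decide)

theorem s_C4_prod_C2_prod_le_s_D8_prod (k : ℕ) {V : Type*} [Group V] [Finite V]
    (hV : ∀ v : V, v ^ 2 = 1) : s k ((C4 × C2) × V) ≤ s k (DihedralGroup 4 × V) := by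
  have hker : ∀ x, C4C2.toKlein x = 1 → x = 1 ∨ x = Klein.toC4C2 (ofAdd 1, 1) := by decide
  have hsq : ∀ x, x ^ 2 = Klein.toC4C2 (ofAdd 1, 1) ∨ ∃ y, Klein.toC4C2 y = x := by decide
  refine s_le_of_central_involution k (π := C4C2.toKlein.prodMap (MonoidHom.id V))
    (ρ := D8.toKlein.prodMap (MonoidHom.id V)) (α := Klein.toC4C2.prodMap (MonoidHom.id V))
    (β := Klein.toD8.prodMap (MonoidHom.id V)) (a := ((ofAdd 1, 1), 1)) ?_ ?_ ?_ ?_ ?_ ?_ ?_ ?_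
  · exact (show Function.Surjective C4C2.toKlein by decide).prodMap Function.surjective_id
  · exact (show Function.Surjective D8.toKlein by decide).prodMap Function.surjective_id
  · simp only [Nat.card_prod, Nat.card_eq_fintype_card]; rfl
  · exact (show Function.Injective Klein.toC4C2 by decide).prodMap Function.injective_id
  · exact (show Function.Injective Klein.toD8 by decide).prodMap Function.injective_id
  · rintro ⟨x, v⟩ hx
    obtain ⟨hx, rfl⟩ := Prod.ext_iff.1 hx
    rcases hker x hx with rfl | rfl
    · exact Subgroup.one_mem _
    · exact Subgroup.mem_zpowers _
  · exact Prod.ext (show D8.toKlein (Klein.toD8 (ofAdd 1, 1)) = 1 by decide) rfl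
  · rintro ⟨x, v⟩
    rcases hsq x with hx | ⟨y, rfl⟩
    · exact Or.inl (Prod.ext hx (hV v))
    · exact Or.inr ⟨(y, v), rfl⟩

end

theorem s_k_C4_le_s_k_D8_general (n k : ℕ) (hn : 3 ≤ n) :
    s k (C4 × (Fin (n - 2) → C2)) ≤ s k (DihedralGroup 4 × (Fin (n - 3) → C2)) := by
  obtain ⟨m, rfl⟩ : ∃ m, n = m + 3 := ⟨n - 3, by omega⟩
  rw [show m + 3 - 2 = m + 1 by omega, Nat.add_sub_cancel,
    s_congr k ((MulEquiv.prodCongr (MulEquiv.refl C4) (Fin.consMulEquiv C2 m).symm).trans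
      MulEquiv.prodAssoc.symm)]
  exact s_C4_prod_C2_prod_le_s_D8_prod k fun v =>
    funext fun i => (show ∀ t : C2, t ^ 2 = 1 by decide) (v i)

theorem s_k_C4_le_s_k_D8 (n k : ℕ) (hn : 3 ≤ n) (hk : k ≤ n) :
    s k (C4 × (Fin (n - 2) → C2)) ≤ s k (DihedralGroup 4 × (Fin (n - 3) → C2)) :=
  s_k_C4_le_s_k_D8_general n k hn
end

section
/- Let G be a finite 2-group of order 2^n and M a normal subgroup of G of order 2. Then for all 0 ≤ k ≤ n, the number of subgroups of G of order 2^k is at most the number of subgroups of order 2^k in (G/M) × C2. -/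
namespace SAux

lemma c2_card : Nat.card C2 = 2 := by
  have : Nat.card C2 = Nat.card (ZMod 2) := Nat.card_congr (Equiv.refl _)
  rw [this, Nat.card_zmod]

lemma ofAdd_one_ne_one : (Multiplicative.ofAdd (1 : ZMod 2)) ≠ (1 : C2) := by decide

variable {X : Type*} [Group X]

/-- The homomorphism to `C2` determined by an index-2 subgroup (junk value otherwise). -/
noncomputable def homToC2 (N : Subgroup X) : X →* C2 := by
  classical
  exact if hN : N.index = 2 then
    { toFun := fun x => if x ∈ N then 1 else Multiplicative.ofAdd 1
      map_one' := if_pos N.one_mem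
      map_mul' := by
        intro a b
        have h := Subgroup.mul_mem_iff_of_index_two hN (a := a) (b := b)
        by_cases ha : a ∈ N <;> by_cases hb : b ∈ N <;>
          simp [ha, hb, h, iff_of_true, iff_of_false] <;> decide }
  else 1

lemma homToC2_eq_one_iff {N : Subgroup X} (hN : N.index = 2) {x : X} :
    homToC2 N x = 1 ↔ x ∈ N := by
  rw [homToC2, dif_pos hN]
  simp only [MonoidHom.coe_mk, OneHom.coe_mk]
  by_cases hx : x ∈ N
  · simp [hx]
  · simp [hx, ofAdd_one_ne_one]

/-- The chosen "complement" subgroup for a pair `(M, L)`. -/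
noncomputable def pick (M L : Subgroup X) : Subgroup X := by
  classical
  exact if h : ∃ H0 : Subgroup X, (H0.subgroupOf L).index = 2 ∧ Disjoint H0 M
    then h.choose else ⊥

lemma pick_spec {M L : Subgroup X}
    (h : ∃ H0 : Subgroup X, (H0.subgroupOf L).index = 2 ∧ Disjoint H0 M) :
    ((pick M L).subgroupOf L).index = 2 ∧ Disjoint (pick M L) M := by
  rw [pick, dif_pos h]
  exact h.choose_spec

/-- The embedding of `L` into `(X ⧸ M) × C2`. -/
noncomputable def psi (M L : Subgroup X) [M.Normal] : L →* (X ⧸ M) × C2 :=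
  MonoidHom.prod ((QuotientGroup.mk' M).comp L.subtype)
    (homToC2 ((pick M L).subgroupOf L))

lemma psi_fst (M L : Subgroup X) [M.Normal] (x : L) :
    (psi M L x).1 = QuotientGroup.mk (x : X) := rfl

lemma psi_inj {M L : Subgroup X} [M.Normal]
    (h : ∃ H0 : Subgroup X, (H0.subgroupOf L).index = 2 ∧ Disjoint H0 M) :
    Function.Injective (psi M L) := by
  obtain ⟨hidx, hdisj⟩ := pick_spec h
  rw [← MonoidHom.ker_eq_bot_iff]
  rw [eq_bot_iff]
  intro x hx
  rw [MonoidHom.mem_ker] at hx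
  have h1 : (psi M L x).1 = 1 := by rw [hx]; rfl
  have h2 : (psi M L x).2 = 1 := by rw [hx]; rfl
  rw [psi_fst] at h1
  have hxM : (x : X) ∈ M := (QuotientGroup.eq_one_iff _).mp h1
  have hxP : (x : X) ∈ pick M L := by
    have := (homToC2_eq_one_iff hidx (x := x)).mp h2
    exact this
  have : (x : X) ∈ (pick M L) ⊓ M := ⟨hxP, hxM⟩
  rw [hdisj.eq_bot] at this
  have : (x : X) = 1 := this
  simpa [Subgroup.mem_bot] using Subtype.ext this

end SAux

open SAux

theorem s_k_le_quotient_times_C2 (G : Type*) [Group G] [Finite G] (n : ℕ)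
    (hG : Nat.card G = 2 ^ n) (M : Subgroup G) [M.Normal] (hM : Nat.card M = 2)
    (k : ℕ) (hk : k ≤ n) :
    s k G ≤ s k ((G ⧸ M) × C2) := by
  classical
  set π := QuotientGroup.mk' M with hπ
  -- the disjointness fact in case `¬ M ≤ H`
  have disj : ∀ H : Subgroup G, ¬ M ≤ H → Disjoint M H := by
    intro H hMH
    have hdvd : Nat.card (M ⊓ H : Subgroup G) ∣ 2 := by
      rw [← hM]; exact Subgroup.card_dvd_of_le inf_le_left
    rcases (Nat.prime_two.eq_one_or_self_of_dvd _ hdvd) with h1 | h2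
    · rw [disjoint_iff]
      exact Subgroup.card_eq_one.mp h1
    · exfalso
      have : (M ⊓ H : Subgroup G) = M :=
        Subgroup.eq_of_le_of_card_ge inf_le_left (by rw [h2, hM])
      exact hMH (le_trans (le_of_eq this.symm) inf_le_right)
  -- card of the sup in case `¬ M ≤ H`
  have cardSup : ∀ H : Subgroup G, Disjoint M H → Nat.card (H ⊔ M : Subgroup G)
      = Nat.card H * 2 := by
    intro H hd
    have e1 : (H ⧸ M.subgroupOf H) ≃* ((H ⊔ M : Subgroup G) ⧸ M.subgroupOf (H ⊔ M)) :=
      QuotientGroup.quotientInfEquivProdNormalQuotient H M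
    have hb : M.subgroupOf H = ⊥ := Subgroup.subgroupOf_eq_bot.mpr hd
    have hcard1 : Nat.card (H ⧸ M.subgroupOf H) = Nat.card H := by
      rw [hb]; exact Nat.card_congr QuotientGroup.quotientBot.toEquiv
    have hcq : Nat.card ((H ⊔ M : Subgroup G) ⧸ M.subgroupOf (H ⊔ M)) = Nat.card H :=
      (Nat.card_congr e1.toEquiv).symm.trans hcard1
    have hms : Nat.card (M.subgroupOf (H ⊔ M : Subgroup G)) = 2 := by
      rw [← hM]; exact Nat.card_congr (Subgroup.subgroupOfEquivOfLe le_sup_right).toEquiv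
    calc Nat.card (H ⊔ M : Subgroup G)
        = Nat.card ((H ⊔ M : Subgroup G) ⧸ M.subgroupOf (H ⊔ M))
          * Nat.card (M.subgroupOf (H ⊔ M : Subgroup G)) :=
          Subgroup.card_eq_card_quotient_mul_card_subgroup _
      _ = Nat.card H * 2 := by rw [hcq, hms]
  -- existence of an index-2 disjoint subgroup in the sup
  have exIdx : ∀ H : Subgroup G, Nat.card H = 2 ^ k → ¬ M ≤ H →
      ∃ H0 : Subgroup G, (H0.subgroupOf (H ⊔ M)).index = 2 ∧ Disjoint H0 M := by
    intro H hH hMH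
    have hd := disj H hMH
    refine ⟨H, ?_, hd.symm⟩
    have hcs : Nat.card (H.subgroupOf (H ⊔ M)) = 2 ^ k := by
      rw [← hH]; exact Nat.card_congr (Subgroup.subgroupOfEquivOfLe le_sup_left).toEquiv
    have hmul := Subgroup.card_mul_index (H.subgroupOf (H ⊔ M))
    rw [hcs, cardSup H hd, hH] at hmul
    have h2k : (2:ℕ) ^ k ≠ 0 := by positivity
    exact Nat.eq_of_mul_eq_mul_left (Nat.pos_of_ne_zero h2k) hmul
  -- the map
  set F : {H : Subgroup G // Nat.card H = 2 ^ k} → Subgroup ((G ⧸ M) × C2) :=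
    fun H => if M ≤ H.1 then ((H.1.map π).prod ⊤)
      else ((H.1.subgroupOf (H.1 ⊔ M)).map (psi M (H.1 ⊔ M))) with hF
  -- cardinality of images under the quotient map
  have cardMap : ∀ H : Subgroup G, M ≤ H → Nat.card (H.map π) * 2 = Nat.card H := by
    intro H hle
    have hker : (π.comp H.subtype).ker = M.subgroupOf H := by
      rw [← MonoidHom.comap_ker]
      have : π.ker = M := QuotientGroup.ker_mk' M
      rw [this]
      rfl
    have hrange : (π.comp H.subtype).range = H.map π := by
      rw [MonoidHom.range_comp, Subgroup.range_subtype]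
    have h1 : Nat.card H = Nat.card (H ⧸ (π.comp H.subtype).ker)
        * Nat.card ((π.comp H.subtype).ker) :=
      Subgroup.card_eq_card_quotient_mul_card_subgroup _
    have h2 : Nat.card (H ⧸ (π.comp H.subtype).ker) = Nat.card (H.map π) := by
      rw [← hrange]
      exact Nat.card_congr (QuotientGroup.quotientKerEquivRange _).toEquiv
    have h3 : Nat.card ((π.comp H.subtype).ker) = 2 := by
      rw [hker, ← hM]
      exact Nat.card_congr (Subgroup.subgroupOfEquivOfLe hle).toEquiv
    rw [h2, h3] at h1
    omega
  have cardProd : ∀ K : Subgroup (G ⧸ M),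
      Nat.card (K.prod (⊤ : Subgroup C2)) = Nat.card K * 2 := by
    intro K
    rw [Nat.card_congr (Subgroup.prodEquiv K ⊤).toEquiv, Nat.card_prod,
      Subgroup.card_top, c2_card]
  -- the image always has the right cardinality
  have cardF : ∀ H : {H : Subgroup G // Nat.card H = 2 ^ k},
      Nat.card (F H) = 2 ^ k := by
    rintro ⟨H, hH⟩
    by_cases hle : M ≤ H
    · simp only [hF, if_pos hle]
      rw [cardProd, cardMap H hle, hH]
    · simp only [hF, if_neg hle]
      have hinj := psi_inj (exIdx H hH hle)
      rw [← Nat.card_congr (Subgroup.equivMapOfInjective _ _ hinj).toEquiv, ← hH]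
      exact Nat.card_congr (Subgroup.subgroupOfEquivOfLe le_sup_left).toEquiv
  -- the first projection of the image in the second case
  have fstF : ∀ H : Subgroup G,
      Subgroup.map (MonoidHom.fst (G ⧸ M) C2) ((H.subgroupOf (H ⊔ M)).map (psi M (H ⊔ M)))
        = H.map π := by
    intro H
    rw [Subgroup.map_map]
    have : (MonoidHom.fst (G ⧸ M) C2).comp (psi M (H ⊔ M))
        = π.comp (H ⊔ M : Subgroup G).subtype := MonoidHom.fst_comp_prod _ _
    rw [this, ← Subgroup.map_map, Subgroup.subgroupOf_map_subtype,
      inf_eq_left.mpr le_sup_left]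
  -- the distinguished element separating the two cases
  have memF : ∀ H : Subgroup G, ¬ M ≤ H →
      ((1 : G ⧸ M), Multiplicative.ofAdd (1 : ZMod 2))
        ∉ ((H.subgroupOf (H ⊔ M)).map (psi M (H ⊔ M))) := by
    intro H hle hmem
    obtain ⟨x, hx, hψx⟩ := Subgroup.mem_map.mp hmem
    have h1 : (psi M (H ⊔ M) x).1 = 1 := by rw [hψx]
    have h2 : (psi M (H ⊔ M) x).2 = Multiplicative.ofAdd (1 : ZMod 2) := by rw [hψx]
    rw [psi_fst] at h1
    have hxM : (x : G) ∈ M := (QuotientGroup.eq_one_iff _).mp h1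
    have hxH : (x : G) ∈ H := hx
    have hx1 : (x : G) = 1 := by
      have := (disj H hle).le_bot ⟨hxM, hxH⟩
      simpa using this
    have : x = 1 := Subtype.ext hx1
    rw [this, map_one] at hψx
    have := congrArg Prod.snd hψx
    exact ofAdd_one_ne_one this.symm
  -- injectivity of F
  have Finj : Function.Injective F := by
    rintro ⟨H1, hH1⟩ ⟨H2, hH2⟩ heq
    by_cases h1 : M ≤ H1 <;> by_cases h2 : M ≤ H2
    · -- both contain M
      simp only [hF, if_pos h1, if_pos h2] at heq
      have hK : H1.map π = H2.map π := by
        ext x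
        constructor <;> intro hx
        · have : (x, (1 : C2)) ∈ (H1.map π).prod ⊤ := Subgroup.mem_prod.mpr ⟨hx, trivial⟩
          rw [heq] at this
          exact (Subgroup.mem_prod.mp this).1
        · have : (x, (1 : C2)) ∈ (H2.map π).prod ⊤ := Subgroup.mem_prod.mpr ⟨hx, trivial⟩
          rw [← heq] at this
          exact (Subgroup.mem_prod.mp this).1
      have e1 : Subgroup.comap π (H1.map π) = Subgroup.comap π (H2.map π) := by rw [hK]
      rw [Subgroup.comap_map_eq, Subgroup.comap_map_eq, QuotientGroup.ker_mk',
        sup_eq_left.mpr h1, sup_eq_left.mpr h2] at e1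
      exact Subtype.ext e1
    · -- H1 contains M, H2 does not : contradiction
      exfalso
      simp only [hF, if_pos h1, if_neg h2] at heq
      refine memF H2 h2 ?_
      rw [← heq]
      exact Subgroup.mem_prod.mpr ⟨Subgroup.one_mem _, trivial⟩
    · exfalso
      simp only [hF, if_pos h2, if_neg h1] at heq
      refine memF H1 h1 ?_
      rw [heq]
      exact Subgroup.mem_prod.mpr ⟨Subgroup.one_mem _, trivial⟩
    · -- neither contains M
      simp only [hF, if_neg h1, if_neg h2] at heq
      have hfst : H1.map π = H2.map π := by
        rw [← fstF H1, ← fstF H2, heq]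
      have hsup : H1 ⊔ M = H2 ⊔ M := by
        have e1 : Subgroup.comap π (H1.map π) = Subgroup.comap π (H2.map π) := by rw [hfst]
        rwa [Subgroup.comap_map_eq, Subgroup.comap_map_eq, QuotientGroup.ker_mk'] at e1
      rw [hsup] at heq
      have hinj := psi_inj (exIdx H2 hH2 h2)
      have hss := Subgroup.map_injective hinj heq
      have e2 := congrArg (Subgroup.map (H2 ⊔ M : Subgroup G).subtype) hss
      rw [Subgroup.subgroupOf_map_subtype, Subgroup.subgroupOf_map_subtype] at e2
      have hle1 : H1 ≤ H2 ⊔ M := hsup ▸ le_sup_left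
      rw [inf_eq_left.mpr hle1, inf_eq_left.mpr le_sup_left] at e2
      exact Subtype.ext e2
  -- conclude
  have : Finite (Subgroup ((G ⧸ M) × C2)) :=
    Finite.of_injective (fun H => (H : Set ((G ⧸ M) × C2))) SetLike.coe_injective
  exact Nat.card_le_card_of_injective (fun H => ⟨F H, cardF H⟩)
    (fun a b hab => Finj (congrArg Subtype.val hab))
end

section
/- Let G be an extraspecial 2-group and let H, K be non-normal subgroups of G. Then H and K are conjugate in G if and only if HΦ(G) = KΦ(G). -/
/-- A finite 2-group is extraspecial if its center, derived subgroup and Frattini subgroup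
coincide and have order 2. -/
def IsExtraspecial (G : Type*) [Group G] : Prop :=
  Subgroup.center G = commutator G ∧ commutator G = frattini G ∧
    Nat.card (Subgroup.center G) = 2

/-!
Write `Z = Z(G) = G' = Φ(G)`. Every subgroup containing `G'` is normal, so a non-normal `H`
meets `Z` trivially; commutators and squares of elements of `H` are central, so `H` is
elementary abelian, i.e. an `𝔽₂`-vector space. Conjugation fixes the normal subgroup `HZ`,
which gives one direction. Conversely, if `HZ = KZ` then `K` has index 2 in `HZ`, so
`h ↦ [h ∉ K]` is a linear form on `H`. So is `h ↦ [⁅g, h⁆ ≠ 1]` for every `g : G`, and these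
forms separate the points of `H` since `H ∩ Z = 1`; by duality one of them is `h ↦ [h ∉ K]`,
and then `g h g⁻¹ = ⁅g, h⁆ h ∈ K` for all `h ∈ H`. Doing the same with `H` and `K` swapped
gives `|H| = |K|`, hence `g H g⁻¹ = K`.
-/

open Subgroup
open scoped commutatorElement

namespace Subgroup

variable {G : Type*} [Group G]

open Classical in
noncomputable def parity (M : Subgroup G) (x : G) : ZMod 2 := if x ∈ M then 0 else 1

theorem parity_eq_zero_iff {M : Subgroup G} {x : G} : M.parity x = 0 ↔ x ∈ M := by
  unfold parity; split_ifs with h <;> simp [h]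

theorem parity_mul_of_relIndex_eq_two {M L : Subgroup G} (hML : M.relIndex L = 2) {x y : G}
    (hx : x ∈ L) (hy : y ∈ L) : M.parity (x * y) = M.parity x + M.parity y := by
  have key : x * y ∈ M ↔ (x ∈ M ↔ y ∈ M) := by
    simpa [mem_subgroupOf] using mul_mem_iff_of_index_two hML (a := ⟨x, hx⟩) (b := ⟨y, hy⟩)
  unfold parity
  by_cases hxM : x ∈ M <;> by_cases hyM : y ∈ M <;> simp [key, hxM, hyM]
  decide

theorem relIndex_sup_eq_card_of_inf_eq_bot {K N : Subgroup G} [N.Normal] [Finite K]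
    (h : K ⊓ N = ⊥) : K.relIndex (K ⊔ N) = Nat.card N := by
  have hK := relIndex_mul_relIndex ⊥ K (K ⊔ N) bot_le le_sup_left
  have hN := relIndex_mul_relIndex ⊥ N (K ⊔ N) bot_le le_sup_right
  rw [relIndex_sup_right, ← inf_relIndex_right N K, inf_comm N K, h] at hN
  simp only [relIndex_bot_left] at hK hN
  exact Nat.eq_of_mul_eq_mul_left Nat.card_pos (hK.trans (hN.symm.trans (mul_comm _ _)))

end Subgroup

theorem AddMonoidHom.surjective_of_separatesPoints {p : ℕ} [Fact p.Prime] {A V : Type*}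
    [AddGroup A] [AddCommGroup V] [Module (ZMod p) V] [Finite V]
    (χ : A →+ Module.Dual (ZMod p) V) (hχ : ∀ v : V, (∀ a, χ a v = 0) → v = 0) :
    Function.Surjective χ := by
  have : Module.Finite (ZMod p) V := Module.Finite.of_finite
  let W := AddSubgroup.toZModSubmodule p χ.range
  have hW : W.dualCoannihilator = ⊥ :=
    eq_bot_iff.2 fun v hv => hχ v fun a => (Submodule.mem_dualCoannihilator v).1 hv _ ⟨a, rfl⟩
  have hW_top : W = ⊤ := by
    rw [← Subspace.dualCoannihilator_dualAnnihilator_eq (W := W), hW,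
      Submodule.dualAnnihilator_bot]
  intro f
  simpa [W] using hW_top.ge (Submodule.mem_top (x := f))

section CentralCommutators

variable {G : Type*} [Group G]

theorem commutatorElement_mem_center (hc : commutator G ≤ center G) (a b : G) :
    ⁅a, b⁆ ∈ center G :=
  hc (commutator_mem_commutator (mem_top a) (mem_top b))

theorem commutatorElement_mul_left_of_le_center (hc : commutator G ≤ center G) (a b c : G) :
    ⁅a * b, c⁆ = ⁅a, c⁆ * ⁅b, c⁆ := by
  have hbc := mem_center_iff.1 (commutatorElement_mem_center hc b c)
  rw [commutatorElement_mul_left_eq_conj_mul, hbc a, mul_inv_cancel_right, hbc]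

theorem commutatorElement_mul_right_of_le_center (hc : commutator G ≤ center G) (a b c : G) :
    ⁅a, b * c⁆ = ⁅a, b⁆ * ⁅a, c⁆ := by
  rw [commutatorElement_mul_right_eq_mul_conj, mul_assoc _ b,
    mem_center_iff.1 (commutatorElement_mem_center hc a c) b, ← mul_assoc, mul_inv_cancel_right]

open scoped Pointwise in
theorem map_conj_sup_eq_of_commutator_le {N : Subgroup G} (hN : commutator G ≤ N)
    (H : Subgroup G) (g : G) : H.map (MulAut.conj g).toMonoidHom ⊔ N = H ⊔ N :=
  calc H.map (MulAut.conj g).toMonoidHom ⊔ N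
      = ConjAct.toConjAct g • H ⊔ ConjAct.toConjAct g • N := by
        rw [(Normal.of_commutator_le G hN).conjAct]; rfl
    _ = H ⊔ N := by
        rw [← smul_sup, (Normal.of_commutator_le G (hN.trans le_sup_right)).conjAct]

theorem mul_self_eq_one_of_mem_center (hZ : Nat.card (center G) = 2) {c : G}
    (hc : c ∈ center G) : c * c = 1 := by
  simpa [hZ, pow_two] using congrArg Subtype.val (pow_card_eq_one' (x := (⟨c, hc⟩ : center G)))

theorem inf_center_eq_bot_of_not_normal (hc : commutator G ≤ center G)
    (hZ : Nat.card (center G) = 2) {H : Subgroup G} (hH : ¬ H.Normal) : H ⊓ center G = ⊥ := by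
  have : Finite (center G) := Nat.finite_of_card_ne_zero (by simp [hZ])
  have hdvd := card_dvd_of_le (inf_le_right : H ⊓ center G ≤ center G)
  rw [hZ, Nat.dvd_prime Nat.prime_two] at hdvd
  refine hdvd.elim card_eq_one.1 fun h2 => absurd (Normal.of_commutator_le G (hc.trans ?_)) hH
  rw [← eq_of_le_of_card_ge inf_le_right (h2.trans hZ.symm).ge]
  exact inf_le_left

theorem isMulCommutative_of_inf_center_eq_bot (hc : commutator G ≤ center G)
    {H : Subgroup G} (hH : H ⊓ center G = ⊥) : IsMulCommutative H :=
  .of_setLike_mul_comm fun a ha b hb => commutatorElement_eq_one_iff_mul_comm.1 <| by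
    have : ⁅a, b⁆ ∈ H ⊓ center G :=
      ⟨H.commutator_le_self (commutator_mem_commutator ha hb), commutatorElement_mem_center hc a b⟩
    rwa [hH, mem_bot] at this

theorem mul_self_eq_one_of_inf_center_eq_bot (hc : commutator G ≤ center G)
    (hZ : Nat.card (center G) = 2) {H : Subgroup G} (hH : H ⊓ center G = ⊥) {h : G}
    (hh : h ∈ H) : h * h = 1 := by
  have hcen : h * h ∈ center G := mem_center_iff.2 fun a =>
    commutatorElement_eq_one_iff_mul_comm.1 <| by
      rw [commutatorElement_mul_right_of_le_center hc,
        mul_self_eq_one_of_mem_center hZ (commutatorElement_mem_center hc a h)]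
  have : h * h ∈ H ⊓ center G := ⟨H.mul_mem hh hh, hcen⟩
  rwa [hH, mem_bot] at this

open scoped IsMulCommutative in
theorem exists_parity_commutatorElement_eq [Finite G] (hc : commutator G ≤ center G)
    (hZ : Nat.card (center G) = 2) {H : Subgroup G} (hH : H ⊓ center G = ⊥)
    (ε : Additive H →+ ZMod 2) :
    ∃ g : G, ∀ h : H, (⊥ : Subgroup G).parity ⁅g, (h : G)⁆ = ε (.ofMul h) := by
  have : IsMulCommutative H := isMulCommutative_of_inf_center_eq_bot hc hH
  let : Module (ZMod 2) (Additive H) := AddCommGroup.zmodModule fun v => by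
    rw [two_nsmul]
    exact congrArg Additive.ofMul
      (Subtype.ext (mul_self_eq_one_of_inf_center_eq_bot hc hZ hH v.toMul.2))
  have hbot : (⊥ : Subgroup G).relIndex (center G) = 2 := by rw [relIndex_bot_left, hZ]
  let χ : Additive G →+ Module.Dual (ZMod 2) (Additive H) :=
    AddMonoidHom.mk' (fun g => AddMonoidHom.toZModLinearMap 2 <|
      AddMonoidHom.mk' (fun h => (⊥ : Subgroup G).parity ⁅g.toMul, (h.toMul : G)⁆)
        fun h₁ h₂ => by
          simp only [toMul_add, coe_mul, commutatorElement_mul_right_of_le_center hc]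
          exact parity_mul_of_relIndex_eq_two hbot (commutatorElement_mem_center hc _ _)
            (commutatorElement_mem_center hc _ _))
      fun g₁ g₂ => by
        ext h
        simp only [toMul_add, commutatorElement_mul_left_of_le_center hc]
        exact parity_mul_of_relIndex_eq_two hbot (commutatorElement_mem_center hc _ _)
          (commutatorElement_mem_center hc _ _)
  have hsep (v : Additive H) (hv : ∀ a, χ a v = 0) : v = 0 := by
    have hv' : (v.toMul : G) ∈ H ⊓ center G := ⟨v.toMul.2, mem_center_iff.2 fun a =>
      commutatorElement_eq_one_iff_mul_comm.1 (mem_bot.1 (parity_eq_zero_iff.1 (hv (.ofMul a))))⟩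
    rw [hH, mem_bot] at hv'
    exact congrArg Additive.ofMul (Subtype.ext hv')
  obtain ⟨g, hg⟩ := χ.surjective_of_separatesPoints hsep (AddMonoidHom.toZModLinearMap 2 ε)
  exact ⟨g.toMul, fun h => LinearMap.congr_fun hg (.ofMul h)⟩

theorem exists_map_conj_le_of_le_sup_center [Finite G] (hc : commutator G ≤ center G)
    (hZ : Nat.card (center G) = 2) {H K : Subgroup G} (hH : H ⊓ center G = ⊥)
    (hK : K ⊓ center G = ⊥) (hHK : H ≤ K ⊔ center G) :
    ∃ g : G, H.map (MulAut.conj g).toMonoidHom ≤ K := by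
  have hKZ : K.relIndex (K ⊔ center G) = 2 := (relIndex_sup_eq_card_of_inf_eq_bot hK).trans hZ
  have hparity {c : G} (hcZ : c ∈ center G) : K.parity c = (⊥ : Subgroup G).parity c := by
    have : c ∈ K ↔ c ∈ (⊥ : Subgroup G) := by
      rw [← hK]; exact ⟨fun hcK => ⟨hcK, hcZ⟩, And.left⟩
    classical exact if_congr this rfl rfl
  let ε : Additive H →+ ZMod 2 := AddMonoidHom.mk' (fun h => K.parity h.toMul)
    fun h₁ h₂ => parity_mul_of_relIndex_eq_two hKZ (hHK h₁.toMul.2) (hHK h₂.toMul.2)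
  obtain ⟨g, hg⟩ := exists_parity_commutatorElement_eq hc hZ hH ε
  refine ⟨g, ?_⟩
  rintro _ ⟨h, hh, rfl⟩
  have hconj : (MulAut.conj g).toMonoidHom h = ⁅g, h⁆ * h := by simp [commutatorElement_def]
  -- both summands equal `ε h`
  rw [← parity_eq_zero_iff, hconj, parity_mul_of_relIndex_eq_two hKZ
    (mem_sup_right (commutatorElement_mem_center hc g h)) (hHK hh),
    hparity (commutatorElement_mem_center hc g h), hg ⟨h, hh⟩]
  exact ZModModule.add_self _

end CentralCommutators

theorem conj_iff_sup_frattini_eq (G : Type*) [Group G] [Finite G] (hG : IsExtraspecial G)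
    (H K : Subgroup G) (hH : ¬ H.Normal) (hK : ¬ K.Normal) :
    (∃ g : G, Subgroup.map (MulAut.conj g).toMonoidHom H = K) ↔
      H ⊔ frattini G = K ⊔ frattini G := by
  obtain ⟨hZC, hCF, hZ⟩ := hG
  have hc : commutator G ≤ center G := hZC.ge
  rw [← hCF, ← hZC]
  have hH' := inf_center_eq_bot_of_not_normal hc hZ hH
  have hK' := inf_center_eq_bot_of_not_normal hc hZ hK
  constructor
  · rintro ⟨g, rfl⟩
    exact (map_conj_sup_eq_of_commutator_le hc H g).symm
  · intro hHK
    obtain ⟨g, hg⟩ := exists_map_conj_le_of_le_sup_center hc hZ hH' hK' (hHK ▸ le_sup_left)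
    obtain ⟨g', hg'⟩ := exists_map_conj_le_of_le_sup_center hc hZ hK' hH' (hHK ▸ le_sup_left)
    have hcard (x : G) (L : Subgroup G) :
        Nat.card (L.map (MulAut.conj x).toMonoidHom) = Nat.card L :=
      card_map_of_injective (MulAut.conj x).injective
    refine ⟨g, eq_of_le_of_card_ge hg ?_⟩
    rw [hcard, ← hcard g' K]
    exact card_le_of_le hg'
end

section
/- Let G be an extraspecial or almost extraspecial 2-group of order 2^n with n ≥ 3. Then the number of cyclic subgroups of order 4 in G is at least the number of cyclic subgroups of order 4 in D8 × C2^{n-3}, and consequently the number of subgroups of G isomorphic to C2 × C2 containing Φ(G) is at most the corresponding number for D8 × C2^{n-3}. -/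
/-- A finite 2-group is almost extraspecial if its derived subgroup and Frattini subgroup
coincide and have order 2 and its center is cyclic of order 4. -/
def IsAlmostExtraspecial (G : Type*) [Group G] : Prop :=
  commutator G = frattini G ∧ Nat.card (commutator G) = 2 ∧
    Nat.card (Subgroup.center G) = 4 ∧ IsCyclic (Subgroup.center G)

/-- The number of cyclic subgroups of order 4 of `G`. -/
noncomputable def c4 (G : Type*) [Group G] : ℕ :=
  Nat.card {H : Subgroup G // IsCyclic H ∧ Nat.card H = 4}

/-- The number of subgroups of `G` isomorphic to `C2 × C2` containing the Frattini
subgroup of `G`. -/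
noncomputable def e2 (G : Type*) [Group G] : ℕ :=
  Nat.card {H : Subgroup G // Nat.card H = 4 ∧ (∀ g ∈ H, g ^ 2 = 1) ∧ frattini G ≤ H}

/-!
In both groups `Φ = Φ(G)` has order 2 and contains every square (in a finite 2-group every
maximal subgroup has index 2). Hence every element has order dividing 4, a subgroup of order 4
containing `Φ` is either cyclic or of exponent 2, and every cyclic subgroup of order 4 contains
`Φ`. The subgroups of order 4 containing `Φ` correspond to the subgroups of order 2 of the
elementary abelian group `G/Φ`, so `c4 + e2 = 2^(n-1) - 1` for both groups and only `c4` has to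
be compared.

`c4` is half the number of elements with nontrivial square; in `D8 × C2^(n-3)` there are
`2^(n-2)` of them. In `G` squares are central, so `(ab)² = [a,b] a² b²`. For a noncommuting pair
`x, y` this forces, for every `g`, one of `g, gx, gy, gxy` to have a nontrivial square, so at
least `|G|/4 = 2^(n-2)` elements of `G` do.
-/

open Subgroup
open scoped commutatorElement

theorem IsPGroup.index_eq_of_isCoatom {p : ℕ} [hp : Fact p.Prime] {G : Type*} [Group G]
    [Finite G] (hG : IsPGroup p G) {M : Subgroup G} (hM : IsCoatom M) : M.index = p := by
  obtain ⟨m, hm⟩ := (hG.to_subgroup M).exists_card_eq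
  obtain ⟨j, hj⟩ := hG.index M
  have hj0 : j ≠ 0 := by
    rintro rfl
    exact hM.1 (index_eq_one.1 (by simpa using hj))
  have hcard := M.card_mul_index
  obtain ⟨K, hK, hMK⟩ := Sylow.exists_subgroup_card_pow_succ (p := p) (H := M)
    ⟨p ^ (j - 1), by rw [← hcard, hm, hj, pow_succ, mul_assoc, ← pow_succ', Nat.sub_add_cancel
      (Nat.pos_of_ne_zero hj0)]⟩ hm
  have hKtop : K = ⊤ := hM.2 K <| lt_of_le_of_ne hMK fun h => by
    rw [← h, hm] at hK
    exact absurd hK (Nat.pow_right_injective hp.out.two_le |>.ne (by omega))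
  rw [hKtop, card_top, ← hcard, hm, pow_succ] at hK
  exact Nat.eq_of_mul_eq_mul_left (pow_pos hp.out.pos m) hK

theorem sq_mem_frattini {G : Type*} [Group G] [Finite G] (hG : IsPGroup 2 G) (x : G) :
    x ^ 2 ∈ frattini G := by
  have : Fact (Nat.Prime 2) := ⟨Nat.prime_two⟩
  simp only [frattini, Order.radical, mem_iInf]
  exact fun M hM => sq_mem_of_index_two (hG.index_eq_of_isCoatom hM) x

theorem map_eq_one_of_mem_frattini {G H : Type*} [Group G] [Group H] (hH : (Nat.card H).Prime)
    (φ : G →* H) {g : G} (hg : g ∈ frattini G) : φ g = 1 := by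
  have : Fact (Nat.card H).Prime := ⟨hH⟩
  have : Finite H := Nat.finite_of_card_ne_zero hH.ne_zero
  have : Nontrivial H := Finite.one_lt_card_iff_nontrivial.1 hH.one_lt
  by_contra hφg
  have hsurj : Function.Surjective φ := by
    rw [← MonoidHom.range_eq_top]
    refine (eq_bot_or_eq_top_of_prime_card φ.range).resolve_left fun h => hφg ?_
    have := φ.mem_range.2 ⟨g, rfl⟩
    rwa [h, mem_bot] at this
  have hbot : IsCoatom (⊥ : Subgroup H) :=
    ⟨bot_ne_top, fun K hK => (eq_bot_or_eq_top_of_prime_card K).resolve_left hK.ne'⟩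
  exact hφg (frattini_le_coatom (isCoatom_comap_of_surjective hsurj hbot) hg)

theorem Subgroup.le_center_of_card_eq_two {G : Type*} [Group G] {N : Subgroup G} [N.Normal]
    (hN : Nat.card N = 2) : N ≤ center G := by
  intro s hs
  rw [mem_center_iff]
  intro g
  by_cases hs1 : s = 1
  · simp [hs1]
  obtain ⟨t, -, ht⟩ := (Nat.card_eq_two_iff' (1 : N)).1 hN
  have hconj : g * s * g⁻¹ = s := by
    have h1 := ht ⟨g * s * g⁻¹, ‹N.Normal›.conj_mem s hs g⟩ (by simpa using hs1)
    have h2 := ht ⟨s, hs⟩ (by simpa using hs1)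
    exact congrArg Subtype.val (h1.trans h2.symm)
  conv_rhs => rw [← hconj]
  group

theorem Subgroup.le_of_card_eq_two_of_mem {G : Type*} [Group G] {N K : Subgroup G}
    (hN : Nat.card N = 2) {s : G} (hsN : s ∈ N) (hs : s ≠ 1) (hsK : s ∈ K) : N ≤ K := by
  have : Finite N := Nat.finite_of_card_ne_zero (by omega)
  have hs2 : s ^ 2 = 1 := by
    simpa [hN] using congrArg Subtype.val (pow_card_eq_one' (x := (⟨s, hsN⟩ : N)))
  have : zpowers s = N := eq_of_le_of_card_ge (zpowers_le.2 hsN) <| by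
    rw [Nat.card_zpowers, orderOf_eq_prime hs2 hs, hN]
  exact this ▸ zpowers_le.2 hsK

theorem pow_four_eq_one_of_sq_mem {G : Type*} [Group G] {N : Subgroup G} (hN : Nat.card N = 2)
    (hsq : ∀ x : G, x ^ 2 ∈ N) (x : G) : x ^ 4 = 1 := by
  have : Finite N := Nat.finite_of_card_ne_zero (by omega)
  simpa [hN, ← pow_mul] using
    congrArg Subtype.val (pow_card_eq_one' (x := (⟨x ^ 2, hsq x⟩ : N)))

theorem card_orderOf_eq_of_isCyclic {G : Type*} [Group G] [Finite G] [IsCyclic G] {d : ℕ}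
    (hd : d ∣ Nat.card G) : Nat.card {g : G // orderOf g = d} = d.totient := by
  classical
  have := Fintype.ofFinite G
  rw [Nat.card_eq_fintype_card, Fintype.card_subtype]
  exact IsCyclic.card_orderOf_eq_totient (Nat.card_eq_fintype_card (α := G) ▸ hd)

theorem card_cyclic_subgroups_mul_totient {G : Type*} [Group G] [Finite G] (d : ℕ) :
    Nat.card {H : Subgroup G // IsCyclic H ∧ Nat.card H = d} * d.totient =
      Nat.card {g : G // orderOf g = d} := by
  classical
  let f (g : {g : G // orderOf g = d}) : {H : Subgroup G // IsCyclic H ∧ Nat.card H = d} :=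
    ⟨zpowers g.1, inferInstance, by rw [Nat.card_zpowers, g.2]⟩
  have hfiber (H : {H : Subgroup G // IsCyclic H ∧ Nat.card H = d}) :
      Nat.card {g // f g = H} = d.totient := by
    obtain ⟨H, hcyc, hcard⟩ := H
    rw [← card_orderOf_eq_of_isCyclic (G := H) (dvd_of_eq hcard.symm)]
    refine Nat.card_congr
      { toFun g := ⟨⟨g.1.1, ?_⟩, ?_⟩
        invFun h := ⟨⟨h.1, ?_⟩, ?_⟩
        left_inv _ := rfl
        right_inv _ := rfl }
    · exact (congrArg Subtype.val g.2 : zpowers g.1.1 = H).le (mem_zpowers _)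
    · rw [orderOf_mk, g.1.2]
    · rw [orderOf_coe, h.2]
    · refine Subtype.ext (eq_of_le_of_card_ge (zpowers_le.2 h.1.2) ?_)
      rw [hcard, Nat.card_zpowers, orderOf_coe, h.2]
  have := Fintype.ofFinite {H : Subgroup G // IsCyclic H ∧ Nat.card H = d}
  rw [← Nat.card_congr (Equiv.sigmaFiberEquiv f), Nat.card_sigma]
  simp [hfiber, Nat.card_eq_fintype_card]

section ExponentFour

variable {G : Type*} [Group G]

theorem orderOf_eq_four_iff {x : G} (hx : x ^ 4 = 1) : orderOf x = 4 ↔ x ^ 2 ≠ 1 := by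
  have : Fact (Nat.Prime 2) := ⟨Nat.prime_two⟩
  refine ⟨fun h hx2 => ?_, fun hx2 => orderOf_eq_prime_pow (n := 1) (by simpa using hx2) hx⟩
  have := orderOf_dvd_of_pow_eq_one hx2
  rw [h] at this
  norm_num at this

theorem isCyclic_iff_exists_sq_ne_one (h4 : ∀ x : G, x ^ 4 = 1) {H : Subgroup G}
    (hH : Nat.card H = 4) : IsCyclic H ↔ ∃ g ∈ H, g ^ 2 ≠ 1 := by
  have : Finite H := Nat.finite_of_card_ne_zero (by omega)
  constructor
  · intro hcyc
    obtain ⟨g, hg⟩ := IsCyclic.exists_ofOrder_eq_natCard (α := H)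
    refine ⟨g, g.2, (orderOf_eq_four_iff (h4 g)).1 ?_⟩
    rw [orderOf_coe, hg, hH]
  · rintro ⟨g, hgH, hg⟩
    refine isCyclic_of_orderOf_eq_card (⟨g, hgH⟩ : H) ?_
    rwa [orderOf_mk, hH, orderOf_eq_four_iff (h4 g)]

theorem two_mul_c4_eq_card_sq_ne_one [Finite G] (h4 : ∀ x : G, x ^ 4 = 1) :
    2 * c4 G = Nat.card {x : G // x ^ 2 ≠ 1} := by
  rw [mul_comm, show 2 = Nat.totient 4 by decide, c4, card_cyclic_subgroups_mul_totient]
  exact Nat.card_congr (Equiv.subtypeEquivRight fun x => orderOf_eq_four_iff (h4 x))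

end ExponentFour

theorem c4_add_e2_eq {G : Type*} [Group G] [Finite G] (hΦ : Nat.card (frattini G) = 2)
    (hsq : ∀ x : G, x ^ 2 ∈ frattini G) :
    c4 G + e2 G = Nat.card {K : Subgroup G // frattini G ≤ K ∧ Nat.card K = 4} := by
  have h4 := pow_four_eq_one_of_sq_mem hΦ hsq
  set C : Set (Subgroup G) := {K | frattini G ≤ K ∧ Nat.card K = 4}
  set E : Set (Subgroup G) := {K | ∀ g ∈ K, g ^ 2 = 1}
  have hc4 : c4 G = (C \ E).ncard := by
    have : {H : Subgroup G | IsCyclic H ∧ Nat.card H = 4} = C \ E := by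
      ext K
      simp only [C, E, Set.mem_sdiff, Set.mem_ofPred_eq, not_forall, exists_prop]
      constructor
      · rintro ⟨hK, hK4⟩
        obtain ⟨g, hgK, hg⟩ := (isCyclic_iff_exists_sq_ne_one h4 hK4).1 hK
        exact ⟨⟨le_of_card_eq_two_of_mem hΦ (hsq g) hg (pow_mem hgK 2), hK4⟩, g, hgK, hg⟩
      · rintro ⟨⟨-, hK4⟩, g, hgK, hg⟩
        exact ⟨(isCyclic_iff_exists_sq_ne_one h4 hK4).2 ⟨g, hgK, hg⟩, hK4⟩
    rw [← this]
    exact Nat.card_coe_set_eq _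
  have he2 : e2 G = (C ∩ E).ncard := by
    have : {H : Subgroup G | Nat.card H = 4 ∧ (∀ g ∈ H, g ^ 2 = 1) ∧ frattini G ≤ H} =
        C ∩ E := by
      ext K
      simp only [C, E, Set.mem_inter_iff, Set.mem_ofPred_eq]
      tauto
    rw [← this]
    exact Nat.card_coe_set_eq _
  rw [hc4, he2, add_comm, Set.ncard_inter_add_ncard_sdiff_eq_ncard]
  exact (Nat.card_coe_set_eq C).symm

theorem card_subgroups_card_two_add_one {V : Type*} [Group V] [Finite V]
    (hV : ∀ v : V, v ^ 2 = 1) : Nat.card {W : Subgroup V // Nat.card W = 2} + 1 = Nat.card V := by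
  have hcyc : ∀ W : Subgroup V, Nat.card W = 2 → IsCyclic W := fun W hW =>
    isCyclic_of_prime_card (p := 2) (hp := ⟨Nat.prime_two⟩) hW
  have h2 := card_cyclic_subgroups_mul_totient (G := V) 2
  rw [show Nat.totient 2 = 1 by decide, mul_one,
    Nat.card_congr (Equiv.subtypeEquivRight fun W => and_iff_right_of_imp (hcyc W)),
    Nat.card_congr (Equiv.subtypeEquivRight fun v =>
      orderOf_eq_prime_iff.trans ⟨And.right, fun h => ⟨hV v, h⟩⟩)] at h2
  rw [h2]
  have := Set.ncard_compl_add_ncard {(1 : V)}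
  rw [Set.ncard_singleton, ← Nat.card_coe_set_eq] at this
  exact this

theorem two_mul_card_subgroups_card_four_add_one {G : Type*} [Group G] [Finite G]
    {N : Subgroup G} [N.Normal] (hN : Nat.card N = 2) (hsq : ∀ x : G, x ^ 2 ∈ N) :
    2 * (Nat.card {K : Subgroup G // N ≤ K ∧ Nat.card K = 4} + 1) = Nat.card G := by
  have hV : ∀ v : G ⧸ N, v ^ 2 = 1 := fun v => QuotientGroup.induction_on v fun x =>
    (QuotientGroup.eq_one_iff _).2 (hsq x)
  have hcomap (W : Subgroup (G ⧸ N)) :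
      Nat.card (W.comap (QuotientGroup.mk' N)) = 2 * Nat.card W := by
    rw [← hN]
    exact QuotientGroup.card_preimage_mk N W
  have hcorr : Nat.card {W : Subgroup (G ⧸ N) // Nat.card W = 2} =
      Nat.card {K : Subgroup G // N ≤ K ∧ Nat.card K = 4} :=
    Nat.card_congr <| ((QuotientGroup.comapMk'OrderIso N).toEquiv.subtypeEquiv fun W => by
      change _ ↔ Nat.card (W.comap (QuotientGroup.mk' N)) = 4
      rw [hcomap]
      omega).trans (Equiv.subtypeSubtypeEquivSubtypeInter _ _)
  rw [← hcorr, card_subgroups_card_two_add_one hV, N.card_eq_card_quotient_mul_card_subgroup, hN,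
    mul_comm]

theorem two_mul_c4_add_e2_add_one {G : Type*} [Group G] [Finite G]
    (hΦ : Nat.card (frattini G) = 2) (hsq : ∀ x : G, x ^ 2 ∈ frattini G) :
    2 * (c4 G + e2 G + 1) = Nat.card G := by
  rw [c4_add_e2_eq hΦ hsq]
  exact two_mul_card_subgroups_card_four_add_one hΦ hsq

section CentralSquares

variable {G : Type*} [Group G]

theorem sq_mul_eq_commutatorElement_mul {a b : G} (h : Commute (a ^ 2) b) :
    (a * b) ^ 2 = ⁅a, b⁆ * a ^ 2 * b ^ 2 := by
  calc (a * b) ^ 2 = a * b * a⁻¹ * b⁻¹ * (b * a ^ 2) * b := by rw [sq]; group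
    _ = ⁅a, b⁆ * a ^ 2 * b ^ 2 := by rw [← h.eq, commutatorElement_def, sq b]; group

theorem exists_sq_mul_ne_one (hsq : ∀ a b : G, Commute (a ^ 2) b) {x y : G}
    (hxy : ¬Commute x y) (g : G) : ∃ i : Fin 4, (g * ![1, x, y, x * y] i) ^ 2 ≠ 1 := by
  by_contra! h
  have hg : g ^ 2 = 1 := by simpa using h 0
  have hgy : ⁅g, y⁆ * y ^ 2 = 1 := by
    simpa [sq_mul_eq_commutatorElement_mul (hsq g y), hg] using h 2
  have hgx : (g * x) ^ 2 = 1 := by simpa using h 1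
  have hgxy : ⁅g * x, y⁆ * y ^ 2 = 1 := by
    have := h 3
    simp only [Matrix.cons_val] at this
    rwa [← mul_assoc, sq_mul_eq_commutatorElement_mul (hsq _ y), hgx, mul_one] at this
  have hconj : g * ⁅x, y⁆ * g⁻¹ = 1 := by
    have : ⁅g * x, y⁆ = g * ⁅x, y⁆ * g⁻¹ * ⁅g, y⁆ := by
      simp only [commutatorElement_def]; group
    have heq : ⁅g * x, y⁆ = ⁅g, y⁆ := mul_right_cancel (hgxy.trans hgy.symm)
    rw [this] at heq
    exact mul_eq_right.1 heq
  exact hxy (commutatorElement_eq_one_iff_commute.1 (by simpa using hconj))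

theorem card_le_four_mul_card_sq_ne_one [Finite G] (hsq : ∀ a b : G, Commute (a ^ 2) b)
    (hG : ¬IsMulCommutative G) : Nat.card G ≤ 4 * Nat.card {a : G // a ^ 2 ≠ 1} := by
  obtain ⟨x, y, hxy⟩ : ∃ x y : G, ¬Commute x y := by
    by_contra! h
    exact hG ⟨⟨h⟩⟩
  let t : Fin 4 → G := ![1, x, y, x * y]
  have hsurj :
      Function.Surjective fun p : {a : G // a ^ 2 ≠ 1} × Fin 4 => p.1.1 * (t p.2)⁻¹ := by
    intro g
    obtain ⟨i, hi⟩ := exists_sq_mul_ne_one hsq hxy g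
    exact ⟨⟨⟨g * t i, hi⟩, i⟩, mul_inv_cancel_right g (t i)⟩
  simpa [Nat.card_prod, mul_comm] using Nat.card_le_card_of_surjective _ hsurj

end CentralSquares

theorem card_le_eight_mul_c4 {G : Type*} [Group G] [Finite G]
    (hΦ : Nat.card (frattini G) = 2) (hsq : ∀ x : G, x ^ 2 ∈ frattini G)
    (hG : ¬IsMulCommutative G) : Nat.card G ≤ 8 * c4 G := by
  have hcentral : ∀ a b : G, Commute (a ^ 2) b := fun a b =>
    (mem_center_iff.1 (le_center_of_card_eq_two hΦ (hsq a)) b).symm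
  have := card_le_four_mul_card_sq_ne_one hcentral hG
  rw [← two_mul_c4_eq_card_sq_ne_one (pow_four_eq_one_of_sq_mem hΦ hsq)] at this
  omega

theorem card_prod_sq_ne_one {A B : Type*} [Group A] [Group B] (hB : ∀ b : B, b ^ 2 = 1) :
    Nat.card {x : A × B // x ^ 2 ≠ 1} = Nat.card {a : A // a ^ 2 ≠ 1} * Nat.card B := by
  rw [← Nat.card_prod]
  refine Nat.card_congr ((Equiv.subtypeEquivRight fun x => ?_).trans
    Equiv.prodSubtypeFstEquivSubtypeProd)
  simp [Prod.ext_iff, hB]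

def dihedralFourIndexParity : DihedralGroup 4 →* C2 where
  toFun
    | .r i => Multiplicative.ofAdd (i.cast : ZMod 2)
    | .sr i => Multiplicative.ofAdd (i.cast : ZMod 2)
  map_one' := by decide
  map_mul' := by decide

def dihedralFourReflectionSign : DihedralGroup 4 →* C2 where
  toFun
    | .r _ => 1
    | .sr _ => Multiplicative.ofAdd 1
  map_one' := by decide
  map_mul' := by decide

theorem eq_one_or_eq_r_two_of_parity_eq_one :
    ∀ a : DihedralGroup 4, dihedralFourIndexParity a = 1 → dihedralFourReflectionSign a = 1 →
      a = 1 ∨ a = DihedralGroup.r 2 := by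
  decide

theorem card_C2 : Nat.card C2 = 2 := by simp

theorem sq_eq_one_of_C2 : ∀ c : C2, c ^ 2 = 1 := by decide

theorem card_dihedralFour_prod (k : ℕ) :
    Nat.card (DihedralGroup 4 × (Fin k → C2)) = 2 ^ (k + 3) := by
  rw [Nat.card_prod, DihedralGroup.nat_card, Nat.card_fun, card_C2, Nat.card_fin, pow_add]
  ring

theorem frattini_dihedralFour_prod (k : ℕ) :
    frattini (DihedralGroup 4 × (Fin k → C2)) = zpowers (DihedralGroup.r 2, 1) := by
  have hC2 : (Nat.card C2).Prime := card_C2 ▸ Nat.prime_two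
  refine le_antisymm (fun g hg => ?_) (zpowers_le.2 ?_)
  · obtain ⟨a, v⟩ := g
    have hv : v = 1 := funext fun i =>
      map_eq_one_of_mem_frattini hC2 ((Pi.evalMonoidHom _ i).comp (MonoidHom.snd _ _)) hg
    have ha : a = 1 ∨ a = DihedralGroup.r 2 := by
      refine eq_one_or_eq_r_two_of_parity_eq_one a ?_ ?_
      · exact map_eq_one_of_mem_frattini hC2 (dihedralFourIndexParity.comp (.fst _ _)) hg
      · exact map_eq_one_of_mem_frattini hC2 (dihedralFourReflectionSign.comp (.fst _ _)) hg
    rcases ha with rfl | rfl <;> rw [hv]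
    · exact one_mem _
    · exact mem_zpowers _
  · have : ((DihedralGroup.r 2 : DihedralGroup 4), (1 : Fin k → C2)) =
        (DihedralGroup.r 1, 1) ^ 2 := by
      rw [sq, Prod.mk_mul_mk, DihedralGroup.r_mul_r, one_mul]
      rfl
    rw [this]
    exact sq_mem_frattini (IsPGroup.of_card (card_dihedralFour_prod k)) _

theorem card_frattini_dihedralFour_prod (k : ℕ) :
    Nat.card (frattini (DihedralGroup 4 × (Fin k → C2))) = 2 := by
  rw [frattini_dihedralFour_prod, Nat.card_zpowers]
  refine orderOf_eq_prime ?_ ?_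
  · rw [sq, Prod.mk_mul_mk, DihedralGroup.r_mul_r, one_mul]
    rfl
  · intro h
    exact absurd (congrArg Prod.fst h) (by decide : (DihedralGroup.r 2 : DihedralGroup 4) ≠ 1)

theorem c4_dihedralFour_prod (k : ℕ) : c4 (DihedralGroup 4 × (Fin k → C2)) = 2 ^ k := by
  have hsq := sq_mem_frattini (IsPGroup.of_card (card_dihedralFour_prod k))
  have h2 := two_mul_c4_eq_card_sq_ne_one
    (pow_four_eq_one_of_sq_mem (card_frattini_dihedralFour_prod k) hsq)
  have hD : Nat.card {a : DihedralGroup 4 // a ^ 2 ≠ 1} = 2 := by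
    rw [Nat.card_eq_fintype_card]
    decide
  rw [card_prod_sq_ne_one fun v => funext fun i => sq_eq_one_of_C2 (v i), hD, Nat.card_fun,
    card_C2, Nat.card_fin] at h2
  omega

theorem c4_ge_and_e2_le (G : Type*) [Group G] [Finite G] (n : ℕ) (hn : 3 ≤ n)
    (hG : Nat.card G = 2 ^ n) (hX : IsExtraspecial G ∨ IsAlmostExtraspecial G) :
    c4 (DihedralGroup 4 × (Fin (n - 3) → C2)) ≤ c4 G ∧
      e2 G ≤ e2 (DihedralGroup 4 × (Fin (n - 3) → C2)) := by
  obtain ⟨hcomm, hΦ⟩ : commutator G = frattini G ∧ Nat.card (frattini G) = 2 := by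
    rcases hX with ⟨hZ, hcΦ, hZ2⟩ | ⟨hcΦ, hc2, -⟩
    · exact ⟨hcΦ, hcΦ ▸ hZ ▸ hZ2⟩
    · exact ⟨hcΦ, hcΦ ▸ hc2⟩
  have hnc : ¬IsMulCommutative G := by
    rw [← commutator_eq_bot_iff, hcomm]
    intro h
    simp [h] at hΦ
  have hsq := sq_mem_frattini (IsPGroup.of_card hG)
  obtain ⟨k, rfl⟩ : ∃ k, n = k + 3 := ⟨n - 3, by omega⟩
  rw [Nat.add_sub_cancel, c4_dihedralFour_prod]
  have hG8 := hG ▸ card_le_eight_mul_c4 hΦ hsq hnc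
  have hGsum := hG ▸ two_mul_c4_add_e2_add_one hΦ hsq
  have hHsum := two_mul_c4_add_e2_add_one (card_frattini_dihedralFour_prod k)
    (sq_mem_frattini (IsPGroup.of_card (card_dihedralFour_prod k)))
  rw [card_dihedralFour_prod, c4_dihedralFour_prod] at hHsum
  have h8 : 2 ^ (k + 3) = 8 * 2 ^ k := by ring
  constructor <;> omega
end
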